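/- In the multiparametric random simplicial complex model, for simplicial subcomplexes A ⊆ B ⊆ Δ_n such that the boundary of every external face of B of dimension ≤ r is contained in A, the probability of the event {A ⊆ Y ⊆ B} equals (∏_{σ ∈ F(A)} p_σ) · (∏_{σ ∈ E(B)} q_σ), where F(A) is the set of faces of A, E(B) is the set of external faces of B of dimension ≤ r, p_σ = p_i for an i-dimensional face, and q_i = 1 - p_i. -/

import Mathlib

open scoped Classical

/-- The simplicial subcomplexes of the `n`-simplex `Δ_n` (vertex set `Fin (n+1)`)
of dimension at most `r`: collections of nonempty faces with at most `r+1`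
vertices, closed under nonempty subsets. -/
noncomputable def simComplexes (n r : ℕ) : Finset (Finset (Finset (Fin (n + 1)))) :=
  Finset.univ.filter (fun Y =>
    (∀ s ∈ Y, s.Nonempty ∧ s.card ≤ r + 1) ∧
    ∀ s ∈ Y, ∀ t ⊆ s, t.Nonempty → t ∈ Y)

/-- The external faces of `Y` of dimension at most `r`: simplices `σ` of `Δ_n`
of dimension at most `r` which are not faces of `Y` but all of whose proper
nonempty subsets are faces of `Y`. -/
noncomputable def extFaces (n r : ℕ) (Y : Finset (Finset (Fin (n + 1)))) :
    Finset (Finset (Fin (n + 1))) :=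
  Finset.univ.filter (fun σ =>
    σ.Nonempty ∧ σ.card ≤ r + 1 ∧ σ ∉ Y ∧ ∀ t ⊂ σ, t.Nonempty → t ∈ Y)

/-- The Costa–Farber probability of a subcomplex `Y` in the multiparametric
model with probability parameters `p 0, p 1, ...` (an `i`-face has `i+1`
vertices, hence the weight `p (card - 1)`). -/
noncomputable def cfProb (n r : ℕ) (p : ℕ → ℝ) (Y : Finset (Finset (Fin (n + 1)))) : ℝ :=
  (∏ σ ∈ Y, p (σ.card - 1)) * ∏ σ ∈ extFaces n r Y, (1 - p (σ.card - 1))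


/-!
Induction on `#(B \ A)`. If `A ≠ B`, pick a face `σ ∈ B \ A` of minimal size, so that its
boundary lies in `A`. The complexes between `A` and `B` containing `σ` are those between
`insert σ A` and `B`; those not containing `σ` are those between `A` and the complex `B'`
obtained from `B` by deleting the star of `σ`, and `E(B') = E(B) ∪ {σ}`. Both pairs satisfy the
hypotheses, so with `Π = ∏_{F(A)} p · ∏_{E(B)} q` the two partial sums are `p_σ · Π` and
`q_σ · Π`, which add up to `Π`.
-/

noncomputable def complexesBetween (n r : ℕ) (A B : Finset (Finset (Fin (n + 1)))) :
    Finset (Finset (Finset (Fin (n + 1)))) :=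
  (simComplexes n r).filter (fun Y => A ⊆ Y ∧ Y ⊆ B)

section

variable {n r : ℕ} {A B Y : Finset (Finset (Fin (n + 1)))} {σ : Finset (Fin (n + 1))}

lemma mem_simComplexes :
    Y ∈ simComplexes n r ↔ (∀ s ∈ Y, s.Nonempty ∧ s.card ≤ r + 1) ∧
      ∀ s ∈ Y, ∀ t ⊆ s, t.Nonempty → t ∈ Y := by
  simp [simComplexes]

lemma mem_extFaces :
    σ ∈ extFaces n r Y ↔
      σ.Nonempty ∧ σ.card ≤ r + 1 ∧ σ ∉ Y ∧ ∀ t ⊂ σ, t.Nonempty → t ∈ Y := by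
  simp [extFaces]

lemma mem_complexesBetween :
    Y ∈ complexesBetween n r A B ↔ Y ∈ simComplexes n r ∧ A ⊆ Y ∧ Y ⊆ B := by
  simp [complexesBetween]

lemma complexesBetween_self (hA : A ∈ simComplexes n r) : complexesBetween n r A A = {A} := by
  ext Y
  simp only [mem_complexesBetween, Finset.mem_singleton]
  constructor
  · rintro ⟨-, hAY, hYA⟩
    exact Finset.Subset.antisymm hYA hAY
  · rintro rfl
    exact ⟨hA, subset_rfl, subset_rfl⟩

lemma insert_mem_simComplexes (hA : A ∈ simComplexes n r) (hσ : σ.Nonempty)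
    (hσcard : σ.card ≤ r + 1) (hσA : ∀ t ⊂ σ, t.Nonempty → t ∈ A) :
    insert σ A ∈ simComplexes n r := by
  obtain ⟨hAfaces, hAclosed⟩ := mem_simComplexes.1 hA
  refine mem_simComplexes.2 ⟨?_, ?_⟩
  · intro s hs
    obtain rfl | hs := Finset.mem_insert.1 hs
    exacts [⟨hσ, hσcard⟩, hAfaces s hs]
  · intro s hs t hts ht
    obtain rfl | hs := Finset.mem_insert.1 hs
    · obtain hts | rfl := hts.ssubset_or_eq
      exacts [Finset.mem_insert_of_mem (hσA t hts ht), Finset.mem_insert_self _ _]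
    · exact Finset.mem_insert_of_mem (hAclosed s hs t hts ht)

lemma filter_not_superset_mem_simComplexes (hB : B ∈ simComplexes n r) :
    B.filter (fun s => ¬σ ⊆ s) ∈ simComplexes n r := by
  obtain ⟨hBfaces, hBclosed⟩ := mem_simComplexes.1 hB
  refine mem_simComplexes.2 ⟨fun s hs => hBfaces s (Finset.mem_filter.1 hs).1, ?_⟩
  intro s hs t hts ht
  obtain ⟨hsB, hσs⟩ := Finset.mem_filter.1 hs
  exact Finset.mem_filter.2 ⟨hBclosed s hsB t hts ht, fun hσt => hσs (hσt.trans hts)⟩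

lemma extFaces_filter_not_superset (hB : B ∈ simComplexes n r) (hσB : σ ∈ B)
    (hσ : ∀ τ ∈ extFaces n r B, ¬σ ⊂ τ) :
    extFaces n r (B.filter (fun s => ¬σ ⊆ s)) = insert σ (extFaces n r B) := by
  obtain ⟨hBfaces, hBclosed⟩ := mem_simComplexes.1 hB
  have hσB' : σ ∉ B.filter (fun s => ¬σ ⊆ s) := fun h => (Finset.mem_filter.1 h).2 subset_rfl
  ext τ
  rw [Finset.mem_insert, mem_extFaces, mem_extFaces]
  constructor
  · rintro ⟨hτ, hτcard, hτB', hτbd⟩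
    by_cases hτB : τ ∈ B
    · have hστ : σ ⊆ τ := by_contra fun h => hτB' (Finset.mem_filter.2 ⟨hτB, h⟩)
      obtain hστ | rfl := hστ.ssubset_or_eq
      · exact absurd (hτbd σ hστ (hBfaces σ hσB).1) hσB'
      · exact .inl rfl
    · exact .inr ⟨hτ, hτcard, hτB, fun t ht ht' => (Finset.mem_filter.1 (hτbd t ht ht')).1⟩
  · rintro (rfl | hτ)
    · refine ⟨(hBfaces τ hσB).1, (hBfaces τ hσB).2, hσB', fun t ht ht' => ?_⟩
      exact Finset.mem_filter.2 ⟨hBclosed τ hσB t ht.subset ht', fun h => ht.2 h⟩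
    · have hτext := mem_extFaces.2 hτ
      obtain ⟨hτne, hτcard, hτB, hτbd⟩ := hτ
      refine ⟨hτne, hτcard, fun h => hτB (Finset.mem_filter.1 h).1, fun t ht ht' => ?_⟩
      exact Finset.mem_filter.2 ⟨hτbd t ht ht', fun hσt => hσ τ hτext (hσt.trans_ssubset ht)⟩

lemma filter_mem_complexesBetween :
    (complexesBetween n r A B).filter (fun Y => σ ∈ Y) = complexesBetween n r (insert σ A) B := by
  ext Y
  simp only [Finset.mem_filter, mem_complexesBetween, Finset.insert_subset_iff]
  tauto

lemma filter_not_mem_complexesBetween (hσ : σ.Nonempty) :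
    (complexesBetween n r A B).filter (fun Y => σ ∉ Y) =
      complexesBetween n r A (B.filter (fun s => ¬σ ⊆ s)) := by
  ext Y
  simp only [Finset.mem_filter, mem_complexesBetween]
  constructor
  · rintro ⟨⟨hY, hAY, hYB⟩, hσY⟩
    refine ⟨hY, hAY, fun s hs => Finset.mem_filter.2 ⟨hYB hs, fun hσs => hσY ?_⟩⟩
    exact (mem_simComplexes.1 hY).2 s hs σ hσs hσ
  · rintro ⟨hY, hAY, hYB⟩
    exact ⟨⟨hY, hAY, hYB.trans (Finset.filter_subset _ _)⟩,
      fun h => (Finset.mem_filter.1 (hYB h)).2 subset_rfl⟩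

lemma sum_complexesBetween_eq_add {M : Type*} [AddCommMonoid M]
    (f : Finset (Finset (Fin (n + 1))) → M) (hσ : σ.Nonempty) :
    ∑ Y ∈ complexesBetween n r A B, f Y =
      ∑ Y ∈ complexesBetween n r (insert σ A) B, f Y +
        ∑ Y ∈ complexesBetween n r A (B.filter (fun s => ¬σ ⊆ s)), f Y := by
  rw [← Finset.sum_filter_add_sum_filter_not _ (fun Y => σ ∈ Y), filter_mem_complexesBetween,
    filter_not_mem_complexesBetween hσ]

lemma card_sdiff_insert_lt (hσ : σ ∈ B \ A) : (B \ insert σ A).card < (B \ A).card := by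
  rw [Finset.sdiff_insert]
  exact Finset.card_erase_lt_of_mem hσ

lemma card_filter_not_superset_sdiff_lt (hσ : σ ∈ B \ A) :
    (B.filter (fun s => ¬σ ⊆ s) \ A).card < (B \ A).card := by
  refine Finset.card_lt_card ((Finset.ssubset_iff_of_subset ?_).2 ⟨σ, hσ, ?_⟩)
  · exact Finset.sdiff_subset_sdiff (Finset.filter_subset _ _) subset_rfl
  · simp

/-- A face of `B \ A` of minimal size has its boundary in `A`. -/
lemma exists_mem_sdiff_boundary_subset (hB : B ∈ simComplexes n r) (hBA : (B \ A).Nonempty) :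
    ∃ σ ∈ B \ A, ∀ t ⊂ σ, t.Nonempty → t ∈ A := by
  obtain ⟨σ, hσ, hσmin⟩ := Finset.exists_min_image (B \ A) Finset.card hBA
  refine ⟨σ, hσ, fun t ht ht' => by_contra fun htA => ?_⟩
  have htB := (mem_simComplexes.1 hB).2 σ (Finset.mem_sdiff.1 hσ).1 t ht.subset ht'
  exact (Finset.card_lt_card ht).not_ge (hσmin t (Finset.mem_sdiff.2 ⟨htB, htA⟩))

end

theorem sum_cfProb_complexesBetween {n r : ℕ} {A B : Finset (Finset (Fin (n + 1)))} (p : ℕ → ℝ)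
    (hA : A ∈ simComplexes n r) (hB : B ∈ simComplexes n r) (hAB : A ⊆ B)
    (hbd : ∀ σ ∈ extFaces n r B, ∀ t ⊂ σ, t.Nonempty → t ∈ A) :
    ∑ Y ∈ complexesBetween n r A B, cfProb n r p Y =
      (∏ σ ∈ A, p (σ.card - 1)) * ∏ σ ∈ extFaces n r B, (1 - p (σ.card - 1)) := by
  obtain hBA | hBA := (B \ A).eq_empty_or_nonempty
  · obtain rfl : A = B := Finset.Subset.antisymm hAB (Finset.sdiff_eq_empty_iff_subset.1 hBA)
    rw [complexesBetween_self hA, Finset.sum_singleton, cfProb]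
  obtain ⟨σ, hσBA, hσbd⟩ := exists_mem_sdiff_boundary_subset hB hBA
  obtain ⟨hσB, hσA⟩ := Finset.mem_sdiff.1 hσBA
  obtain ⟨hσ, hσcard⟩ := (mem_simComplexes.1 hB).1 σ hσB
  have hσext : σ ∉ extFaces n r B := fun h => (mem_extFaces.1 h).2.2.1 hσB
  have hext : extFaces n r (B.filter (fun s => ¬σ ⊆ s)) = insert σ (extFaces n r B) :=
    extFaces_filter_not_superset hB hσB fun τ hτ hστ => hσA (hbd τ hτ σ hστ hσ)
  have hA_star : A ⊆ B.filter (fun s => ¬σ ⊆ s) := fun s hs =>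
    Finset.mem_filter.2 ⟨hAB hs, fun hσs => hσA ((mem_simComplexes.1 hA).2 s hs σ hσs hσ)⟩
  have hbd_star : ∀ τ ∈ extFaces n r (B.filter (fun s => ¬σ ⊆ s)), ∀ t ⊂ τ,
      t.Nonempty → t ∈ A := by
    rw [hext]
    intro τ hτ
    obtain rfl | hτ := Finset.mem_insert.1 hτ
    exacts [hσbd, hbd τ hτ]
  rw [sum_complexesBetween_eq_add _ hσ,
    sum_cfProb_complexesBetween p (insert_mem_simComplexes hA hσ hσcard hσbd) hB
      (Finset.insert_subset hσB hAB)
      (fun τ hτ t ht ht' => Finset.mem_insert_of_mem (hbd τ hτ t ht ht')),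
    sum_cfProb_complexesBetween p hA (filter_not_superset_mem_simComplexes hB) hA_star hbd_star,
    hext, Finset.prod_insert hσA, Finset.prod_insert hσext]
  ring
termination_by (B \ A).card
decreasing_by
  · exact card_sdiff_insert_lt hσBA
  · exact card_filter_not_superset_sdiff_lt hσBA

theorem stmt9_general (n r : ℕ) (p : ℕ → ℝ)
    (A B : Finset (Finset (Fin (n + 1))))
    (hA : A ∈ simComplexes n r) (hB : B ∈ simComplexes n r) (hAB : A ⊆ B)
    (hbd : ∀ σ ∈ extFaces n r B, ∀ t ⊂ σ, t.Nonempty → t ∈ A) :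
    ∑ Y ∈ (simComplexes n r).filter (fun Y => A ⊆ Y ∧ Y ⊆ B), cfProb n r p Y =
      (∏ σ ∈ A, p (σ.card - 1)) * ∏ σ ∈ extFaces n r B, (1 - p (σ.card - 1)) :=
  sum_cfProb_complexesBetween p hA hB hAB hbd

/-- Costa–Farber, Lemma 2.3: if `A ⊆ B ⊆ Δ_n` are subcomplexes such that the
boundary of every external face of `B` of dimension `≤ r` is contained in `A`,
then `P{A ⊆ Y ⊆ B} = ∏_{σ ∈ F(A)} p_σ · ∏_{σ ∈ E(B)} q_σ`. -/
theorem stmt9 (n r : ℕ) (p : ℕ → ℝ) (hp : ∀ i, 0 ≤ p i ∧ p i ≤ 1)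
    (A B : Finset (Finset (Fin (n + 1))))
    (hA : A ∈ simComplexes n r) (hB : B ∈ simComplexes n r) (hAB : A ⊆ B)
    (hbd : ∀ σ ∈ extFaces n r B, ∀ t ⊂ σ, t.Nonempty → t ∈ A) :
    ∑ Y ∈ (simComplexes n r).filter (fun Y => A ⊆ Y ∧ Y ⊆ B), cfProb n r p Y =
      (∏ σ ∈ A, p (σ.card - 1)) * ∏ σ ∈ extFaces n r B, (1 - p (σ.card - 1)) :=
  stmt9_general n r p A B hA hB hAB hbd
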